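/- arXiv:1806.09087 — 2 statements merged into one kernel-verified Lean document; each statement's English description precedes it below -/
import Mathlib

section
/- Let A and B be positive semi-definite d×d real matrices with ker(A) ⊆ ker(B). Then Tr((√A − √B)²) ≤ Tr((A − B)² A†), where √· denotes the positive semi-definite square root and A† the Moore–Penrose pseudoinverse of A. -/
/-!
Write `X = √A`, `Y = √B`, `D = X - Y` and `Q = cfc (fun x ↦ (√x)⁻¹) A`. Then `Q * Q = A†` and
`Q * X = A† * A` is the orthogonal projection onto the range of `A`, which fixes `X`, and also `Y`
because `ker A ⊆ ker B = ker Y`. Since `A - B = X D + D Y`, this gives `Q (A - B) = D + Q D Y`, so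
`Tr((A - B)² A†) = ‖D + Q D Y‖² = ‖D‖² + 2 Tr(D Q D Y) + ‖Q D Y‖²` in the Frobenius norm. The
middle term is the trace of a product of the positive semidefinite matrices `D Q D` and `Y`, hence
nonnegative, and `‖D‖² = Tr((X - Y)²)`.
-/

/-- `P` is the Moore–Penrose pseudoinverse of `A`. -/
def IsMoorePenroseInv {d : ℕ} (A P : Matrix (Fin d) (Fin d) ℝ) : Prop :=
  A * P * A = A ∧ P * A * P = P ∧ (A * P).IsSymm ∧ (P * A).IsSymm

/-- The square root of a positive semidefinite matrix, as `Matrix.PosSemidef.sqrt` was defined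
in the older Mathlib. -/
noncomputable def posSemidefSqrt {d : ℕ} {A : Matrix (Fin d) (Fin d) ℝ} (hA : A.PosSemidef) :
    Matrix (Fin d) (Fin d) ℝ :=
  hA.1.eigenvectorUnitary.1 * Matrix.diagonal ((↑) ∘ (√·) ∘ hA.1.eigenvalues) *
    (star hA.1.eigenvectorUnitary : Matrix (Fin d) (Fin d) ℝ)

open Matrix MatrixOrder

namespace Matrix

variable {n : Type*} [Fintype n] [DecidableEq n]

lemma cfc_mul_cfc (f g : ℝ → ℝ) (A : Matrix n n ℝ) :
    cfc f A * cfc g A = cfc (fun x ↦ f x * g x) A :=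
  (cfc_mul f g A (A.finite_real_spectrum.continuousOn f)
    (A.finite_real_spectrum.continuousOn g)).symm

lemma PosSemidef.cfc_congr {A : Matrix n n ℝ} (hA : A.PosSemidef) {f g : ℝ → ℝ}
    (h : ∀ x, 0 ≤ x → f x = g x) : cfc f A = cfc g A :=
  _root_.cfc_congr fun x hx ↦ h x (spectrum_nonneg_of_nonneg hA.nonneg hx)

lemma IsHermitian.mul_cfc {A : Matrix n n ℝ} (hA : A.IsHermitian) (f : ℝ → ℝ) :
    A * cfc f A = cfc (fun x ↦ x * f x) A := by
  rw [← cfc_mul_cfc, cfc_id' ℝ A hA.isSelfAdjoint]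

lemma IsHermitian.cfc_mul {A : Matrix n n ℝ} (hA : A.IsHermitian) (f : ℝ → ℝ) :
    cfc f A * A = cfc (fun x ↦ f x * x) A := by
  rw [← cfc_mul_cfc, cfc_id' ℝ A hA.isSelfAdjoint]

lemma PosSemidef.sqrt_eq_cfc {A : Matrix n n ℝ} (hA : A.PosSemidef) :
    CFC.sqrt A = cfc Real.sqrt A := by
  rw [CFC.sqrt_eq_real_sqrt A hA.nonneg, cfcₙ_eq_cfc]

lemma PosSemidef.cfc_inv_sqrt_mul_self {A : Matrix n n ℝ} (hA : A.PosSemidef) :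
    cfc (fun x ↦ (√x)⁻¹) A * cfc (fun x ↦ (√x)⁻¹) A = cfc (fun x : ℝ ↦ x⁻¹) A := by
  rw [cfc_mul_cfc]
  exact hA.cfc_congr fun x hx ↦ by rw [← mul_inv, Real.mul_self_sqrt hx]

lemma PosSemidef.cfc_inv_sqrt_mul_sqrt {A : Matrix n n ℝ} (hA : A.PosSemidef) :
    cfc (fun x ↦ (√x)⁻¹) A * CFC.sqrt A = cfc (fun x : ℝ ↦ x⁻¹) A * A := by
  rw [hA.sqrt_eq_cfc, cfc_mul_cfc, hA.1.cfc_mul]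
  refine hA.cfc_congr fun x hx ↦ ?_
  rcases hx.eq_or_lt with rfl | hx
  · simp
  · rw [inv_mul_cancel₀ (by positivity), inv_mul_cancel₀ hx.ne']

lemma PosSemidef.cfc_inv_mul_self_mul_sqrt {A : Matrix n n ℝ} (hA : A.PosSemidef) :
    cfc (fun x : ℝ ↦ x⁻¹) A * A * CFC.sqrt A = CFC.sqrt A := by
  rw [hA.1.cfc_mul, hA.sqrt_eq_cfc, cfc_mul_cfc]
  congr! 2 with x
  rcases eq_or_ne x 0 with rfl | hx
  · simp
  · rw [inv_mul_cancel₀ hx, one_mul]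

lemma PosSemidef.mul_sqrt_eq_sqrt_of_mul_eq {B P : Matrix n n ℝ} (hB : B.PosSemidef)
    (hP : P.IsHermitian) (h : B * P = B) : P * CFC.sqrt B = CFC.sqrt B := by
  set Y := CFC.sqrt B
  have hY : Yᴴ = Y := (CFC.sqrt_nonneg B).posSemidef.1
  have hYP : Y * (1 - P) = 0 := by
    rw [← conjTranspose_mul_self_eq_zero, conjTranspose_mul, hY, mul_assoc, ← mul_assoc Y,
      CFC.sqrt_mul_sqrt_self B hB.nonneg, mul_sub, mul_one, h, sub_self, mul_zero]
  have := congrArg (·ᴴ) hYP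
  rwa [conjTranspose_mul, conjTranspose_sub, conjTranspose_one, hP.eq, hY, conjTranspose_zero,
    sub_mul, one_mul, sub_eq_zero, eq_comm] at this

lemma mul_eq_self_of_ker_subset {A B P : Matrix n n ℝ}
    (hker : ∀ x, A *ᵥ x = 0 → B *ᵥ x = 0) (h : A * P = A) : B * P = B := by
  refine ext_of_mulVec_single fun i ↦ ?_
  rw [← sub_eq_zero, ← mulVec_mulVec, ← mulVec_sub,
    hker _ (by rw [mulVec_sub, mulVec_mulVec, h, sub_self])]

lemma PosSemidef.trace_mul_nonneg {M N : Matrix n n ℝ} (hM : M.PosSemidef) (hN : N.PosSemidef) :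
    0 ≤ (M * N).trace := by
  obtain ⟨S, rfl⟩ := CStarAlgebra.nonneg_iff_eq_star_mul_self.mp hM.nonneg
  rw [mul_assoc, trace_mul_comm, star_eq_conjTranspose]
  exact (hN.mul_mul_conjTranspose_same S).trace_nonneg

theorem trace_sub_sq_le_of_mul_mul_sub_eq {X Y Q : Matrix n n ℝ} (hX : X.IsHermitian)
    (hY : Y.PosSemidef) (hQ : Q.PosSemidef) (hQX : Q * X * (X - Y) = X - Y) :
    ((X - Y) ^ 2).trace ≤ ((X * X - Y * Y) ^ 2 * (Q * Q)).trace := by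
  set D := X - Y
  set E := Q * D * Y
  have hD : Dᴴ = D := by rw [conjTranspose_sub, hX.eq, hY.1.eq]
  have hM : (X * X - Y * Y)ᴴ = X * X - Y * Y := by
    rw [conjTranspose_sub, conjTranspose_mul, conjTranspose_mul, hX.eq, hY.1.eq]
  have hQM : Q * (X * X - Y * Y) = D + E := by
    rw [show X * X - Y * Y = X * D + D * Y by simp only [D]; noncomm_ring, mul_add, ← mul_assoc,
      ← mul_assoc, hQX]
  have hRHS : ((X * X - Y * Y) ^ 2 * (Q * Q)).trace = ((D + E)ᴴ * (D + E)).trace := by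
    rw [← hQM, conjTranspose_mul, hQ.1.eq, hM, sq]
    simp only [mul_assoc]
    rw [trace_mul_comm]
    simp only [mul_assoc]
  have hcross : 0 ≤ (D * E).trace := by
    rw [show D * E = D * Q * D * Y by simp only [E, mul_assoc]]
    have hDQD := hQ.conjTranspose_mul_mul_same D
    rw [hD] at hDQD
    exact hDQD.trace_mul_nonneg hY
  have hEE : 0 ≤ (Eᴴ * E).trace := (posSemidef_conjTranspose_mul_self E).trace_nonneg
  have hsym : (Eᴴ * D).trace = (Dᴴ * E).trace := by
    conv_lhs => rw [← conjTranspose_conjTranspose D, ← conjTranspose_mul, trace_conjTranspose,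
      star_trivial]
  rw [sq D, hRHS, conjTranspose_add, add_mul, mul_add, mul_add, trace_add, trace_add, trace_add,
    hsym, hD]
  linarith

end Matrix

lemma posSemidefSqrt_eq_sqrt {d : ℕ} {A : Matrix (Fin d) (Fin d) ℝ} (hA : A.PosSemidef) :
    posSemidefSqrt hA = CFC.sqrt A := by
  rw [hA.sqrt_eq_cfc, hA.1.cfc_eq, IsHermitian.cfc, Unitary.conjStarAlgAut_apply, posSemidefSqrt,
    RCLike.ofReal_real_eq_id, Function.id_comp]
  rfl

namespace IsMoorePenroseInv

variable {d : ℕ} {A P₁ P₂ : Matrix (Fin d) (Fin d) ℝ}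

theorem unique (h₁ : IsMoorePenroseInv A P₁) (h₂ : IsMoorePenroseInv A P₂) : P₁ = P₂ := by
  obtain ⟨a₁, b₁, c₁, d₁⟩ := h₁
  obtain ⟨a₂, b₂, c₂, d₂⟩ := h₂
  have hAP : A * P₁ = A * P₂ :=
    calc A * P₁ = A * P₂ * (A * P₁) := by rw [← mul_assoc, a₂]
      _ = (A * P₁ * (A * P₂))ᵀ := by rw [transpose_mul, c₁.eq, c₂.eq]
      _ = A * P₂ := by rw [← mul_assoc, a₁, c₂.eq]
  have hPA : P₁ * A = P₂ * A :=
    calc P₁ * A = P₁ * A * (P₂ * A) := by rw [mul_assoc, ← mul_assoc A, a₂]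
      _ = (P₂ * A * (P₁ * A))ᵀ := by rw [transpose_mul, d₁.eq, d₂.eq]
      _ = P₂ * A := by rw [mul_assoc, ← mul_assoc A, a₁, d₂.eq]
  calc P₁ = P₁ * A * P₁ := b₁.symm
    _ = P₂ * A * P₂ := by rw [mul_assoc, hAP, ← mul_assoc, hPA]
    _ = P₂ := b₂

end IsMoorePenroseInv

theorem Matrix.IsHermitian.isMoorePenroseInv_cfc_inv {d : ℕ} {A : Matrix (Fin d) (Fin d) ℝ}
    (hA : A.IsHermitian) : IsMoorePenroseInv A (cfc (fun x : ℝ ↦ x⁻¹) A) := by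
  have hsymm (f : ℝ → ℝ) : (cfc f A).IsSymm := (cfc_predicate f A : IsSelfAdjoint _)
  refine ⟨?_, ?_, ?_, ?_⟩
  · simp_rw [hA.mul_cfc, hA.cfc_mul, mul_inv_mul_cancel, cfc_id' ℝ A hA.isSelfAdjoint]
  · rw [hA.cfc_mul, cfc_mul_cfc]
    congr! 2 with x
    simpa using mul_inv_mul_cancel x⁻¹
  · rw [hA.mul_cfc]
    exact hsymm _
  · rw [hA.cfc_mul]
    exact hsymm _

/-- Lemma 2.2: if `A, B` are PSD with `ker A ⊆ ker B`, then
`Tr((√A − √B)²) ≤ Tr((A − B)² A†)`. -/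
theorem stmt0 {d : ℕ} (A B : Matrix (Fin d) (Fin d) ℝ)
    (hA : A.PosSemidef) (hB : B.PosSemidef)
    (hker : ∀ x : Fin d → ℝ, A.mulVec x = 0 → B.mulVec x = 0)
    (Ap : Matrix (Fin d) (Fin d) ℝ) (hAp : IsMoorePenroseInv A Ap) :
    ((posSemidefSqrt hA - posSemidefSqrt hB) ^ 2).trace ≤ ((A - B) ^ 2 * Ap).trace := by
  rw [posSemidefSqrt_eq_sqrt, posSemidefSqrt_eq_sqrt]
  obtain rfl : Ap = cfc (fun x : ℝ ↦ x⁻¹) A := hAp.unique hA.1.isMoorePenroseInv_cfc_inv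
  have hPY : cfc (fun x : ℝ ↦ x⁻¹) A * A * CFC.sqrt B = CFC.sqrt B :=
    hB.mul_sqrt_eq_sqrt_of_mul_eq hAp.2.2.2
      (mul_eq_self_of_ker_subset hker (by rw [← mul_assoc, hAp.1]))
  have hQ : (cfc (fun x ↦ (√x)⁻¹) A).PosSemidef :=
    (cfc_nonneg fun x _ ↦ inv_nonneg.2 (Real.sqrt_nonneg x)).posSemidef
  have key := trace_sub_sq_le_of_mul_mul_sub_eq (CFC.sqrt_nonneg A).posSemidef.1
    (CFC.sqrt_nonneg B).posSemidef hQ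
    (by rw [hA.cfc_inv_sqrt_mul_sqrt, mul_sub, hA.cfc_inv_mul_self_mul_sqrt, hPY])
  rwa [CFC.sqrt_mul_sqrt_self A hA.nonneg, CFC.sqrt_mul_sqrt_self B hB.nonneg,
    hA.cfc_inv_sqrt_mul_self] at key
end

section
/- Let τ be a stopping time (with respect to a filtration F_t) taking values in [0,∞], and suppose β > 0 is such that for every t ≥ 0, E[τ | F_t] ≤ t + β² almost surely. Then for every natural number i, P(τ ≥ 2iβ²) ≤ 2^{−i}. -/
/-!
On the `ℱ t`-measurable event `{t ≤ τ}` the overshoot `τ - t` has integral at most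
`β² P(t ≤ τ)`, since `E[τ | ℱ t] ≤ t + β²`; by Markov's inequality it exceeds `2β²` with
conditional probability at most `1/2`. Hence `P(τ ≥ t + 2β²) ≤ P(τ ≥ t) / 2`, and iterating
from `t = 0` gives the bound.
-/

open MeasureTheory ProbabilityTheory

section

variable {Ω : Type*} {m m0 : MeasurableSpace Ω} {μ : Measure Ω} [IsFiniteMeasure μ]
  {τ : Ω → ℝ} {t c : ℝ}

lemma mul_measureReal_le_setIntegral_sub (hτ : Integrable τ μ)
    (hs : MeasurableSet {ω | t ≤ τ ω}) {d : ℝ} (hd : 0 ≤ d) :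
    d * μ.real {ω | t + d ≤ τ ω} ≤ ∫ ω in {ω | t ≤ τ ω}, (τ ω - t) ∂μ := by
  have hnonneg : 0 ≤ᵐ[μ.restrict {ω | t ≤ τ ω}] fun ω => τ ω - t := by
    filter_upwards [ae_restrict_mem hs] with ω hω
    exact sub_nonneg.2 hω
  have hsub : {ω | t + d ≤ τ ω} ⊆ {ω | d ≤ τ ω - t} ∩ {ω | t ≤ τ ω} :=
    fun ω (hω : t + d ≤ τ ω) => ⟨show d ≤ τ ω - t by linarith, show t ≤ τ ω by linarith⟩
  calc d * μ.real {ω | t + d ≤ τ ω}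
      ≤ d * (μ.restrict {ω | t ≤ τ ω}).real {ω | d ≤ τ ω - t} := by
        rw [measureReal_restrict_apply' hs]
        exact mul_le_mul_of_nonneg_left (measureReal_mono hsub) hd
    _ ≤ _ := mul_meas_ge_le_integral_of_nonneg hnonneg
        (hτ.sub (integrable_const t)).integrableOn d

lemma setIntegral_sub_le_of_condExp_le (hm : m ≤ m0) (hτ : Integrable τ μ) {s : Set Ω}
    (hs : MeasurableSet[m] s) (hcond : μ[τ|m] ≤ᵐ[μ] fun _ => t + c) :
    ∫ ω in s, (τ ω - t) ∂μ ≤ c * μ.real s := by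
  have hτs : ∫ ω in s, τ ω ∂μ ≤ (t + c) * μ.real s := calc
    ∫ ω in s, τ ω ∂μ = ∫ ω in s, (μ[τ|m]) ω ∂μ := (setIntegral_condExp hm hτ hs).symm
    _ ≤ ∫ _ in s, (t + c) ∂μ :=
      setIntegral_mono_ae integrable_condExp.integrableOn integrableOn_const hcond
    _ = (t + c) * μ.real s := by rw [setIntegral_const, smul_eq_mul, mul_comm]
  rw [integral_sub hτ.integrableOn integrableOn_const, setIntegral_const, smul_eq_mul]
  linarith

lemma measure_add_two_mul_le_half (hm : m ≤ m0) (hτ : Integrable τ μ)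
    (hs : MeasurableSet[m] {ω | t ≤ τ ω}) (hc : 0 < c) (hcond : μ[τ|m] ≤ᵐ[μ] fun _ => t + c) :
    μ {ω | t + 2 * c ≤ τ ω} ≤ 2⁻¹ * μ {ω | t ≤ τ ω} := by
  have hmarkov := (mul_measureReal_le_setIntegral_sub hτ (hm _ hs) (by positivity : 0 ≤ 2 * c)).trans
    (setIntegral_sub_le_of_condExp_le hm hτ hs hcond)
  have hreal : μ.real {ω | t + 2 * c ≤ τ ω} ≤ 2⁻¹ * μ.real {ω | t ≤ τ ω} := by
    nlinarith
  rwa [measureReal_def, measureReal_def, ← ENNReal.toReal_ofReal (by norm_num : (0:ℝ) ≤ 2⁻¹),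
    ← ENNReal.toReal_mul, ENNReal.toReal_le_toReal (measure_ne_top _ _) (by finiteness),
    ENNReal.ofReal_inv_of_pos two_pos, ENNReal.ofReal_ofNat] at hreal

end

theorem stmt9_general {Ω : Type*} {m0 : MeasurableSpace Ω} (μ : Measure Ω) [IsProbabilityMeasure μ]
    (ℱ : Filtration ℝ m0) (τ : Ω → ℝ) (β : ℝ) (hβ : 0 < β)
    (hτ : IsStoppingTime ℱ (fun ω => (τ ω : WithTop ℝ))) (hτint : Integrable τ μ)
    (hcond : ∀ t : ℝ, 0 ≤ t → μ[τ|ℱ t] ≤ᵐ[μ] fun _ => t + β ^ 2) :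
    ∀ i : ℕ, μ {ω | 2 * i * β ^ 2 ≤ τ ω} ≤ (1 / 2 : ENNReal) ^ i := by
  intro i
  induction i with
  | zero => simpa using prob_le_one
  | succ i ih =>
    have hstep := measure_add_two_mul_le_half (ℱ.le _) hτint
      (by simpa using hτ.measurableSet_ge (2 * i * β ^ 2)) (by positivity)
      (hcond _ (by positivity))
    calc μ {ω | 2 * ↑(i + 1) * β ^ 2 ≤ τ ω}
        = μ {ω | 2 * i * β ^ 2 + 2 * β ^ 2 ≤ τ ω} := by push_cast; ring_nf
      _ ≤ 2⁻¹ * μ {ω | 2 * i * β ^ 2 ≤ τ ω} := hstep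
      _ ≤ 2⁻¹ * (1 / 2) ^ i := by gcongr
      _ = (1 / 2) ^ (i + 1) := by rw [one_div, pow_succ']

/-- If a nonnegative stopping time `τ` satisfies `E[τ | F_t] ≤ t + β²` a.s. for every
`t ≥ 0`, then `P(τ ≥ 2iβ²) ≤ 2⁻ⁱ` for every natural `i`. -/
theorem stmt9 {Ω : Type*} {m0 : MeasurableSpace Ω} (μ : Measure Ω) [IsProbabilityMeasure μ]
    (ℱ : Filtration ℝ m0) (τ : Ω → ℝ) (β : ℝ) (hβ : 0 < β)
    (hτ : IsStoppingTime ℱ (fun ω => (τ ω : WithTop ℝ))) (hτ0 : ∀ ω, 0 ≤ τ ω) (hτint : Integrable τ μ)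
    (hcond : ∀ t : ℝ, 0 ≤ t → μ[τ|ℱ t] ≤ᵐ[μ] fun _ => t + β ^ 2) :
    ∀ i : ℕ, μ {ω | 2 * i * β ^ 2 ≤ τ ω} ≤ (1 / 2 : ENNReal) ^ i :=
  stmt9_general μ ℱ τ β hβ hτ hτint hcond
end
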